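/- arXiv:2002.07691 — 6 statements merged into one kernel-verified Lean document; each statement's English description precedes it below -/
import Mathlib

section
/- Let K ≥ 1 be an integer, let α_1, …, α_K be real numbers with 0 < α_1 ≤ α_2 ≤ ⋯ ≤ α_K, and let ρ_1, …, ρ_K be nonnegative real numbers. Then the following are equivalent: (i) there exist real numbers β_1, …, β_{K+1} with β_1 = 0, β_{K+1} = α_K, β_k ≤ β_{k+1} for all k ∈ {1,…,K}, β_{k+1} ≤ α_k for all k ∈ {1,…,K−1}, and ρ_k ≤ β_{k+1} − β_k for all k ∈ {1,…,K}; (ii) ∑_{i=1}^{k} ρ_i ≤ α_k for all k ∈ {1,…,K}. -/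
/-- Fourier–Motzkin elimination lemma (Lemma 2): the layered power-allocation
feasibility conditions are equivalent to the cumulative GDoF inequalities. -/
theorem stmt0 (K : ℕ) (hK : 1 ≤ K) (α ρ : ℕ → ℝ)
    (hα0 : 0 < α 1)
    (hαmono : ∀ k ∈ Finset.Icc 1 (K - 1), α k ≤ α (k + 1))
    (hρ : ∀ k ∈ Finset.Icc 1 K, 0 ≤ ρ k) :
    (∃ β : ℕ → ℝ, β 1 = 0 ∧ β (K + 1) = α K ∧
      (∀ k ∈ Finset.Icc 1 K, β k ≤ β (k + 1)) ∧
      (∀ k ∈ Finset.Icc 1 (K - 1), β (k + 1) ≤ α k) ∧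
      (∀ k ∈ Finset.Icc 1 K, ρ k ≤ β (k + 1) - β k)) ↔
    (∀ k ∈ Finset.Icc 1 K, ∑ i ∈ Finset.Icc 1 k, ρ i ≤ α k) := by
  constructor
  · rintro ⟨β, hβ1, hβK, hmono, hub, hρβ⟩ k hk
    simp only [Finset.mem_Icc] at hk
    have key : ∀ m, m ≤ K → ∑ i ∈ Finset.Icc 1 m, ρ i ≤ β (m + 1) := by
      intro m
      induction m with
      | zero => intro _; simp [hβ1]
      | succ n ih =>
        intro hm
        rw [Finset.sum_Icc_succ_top (by omega : 1 ≤ n + 1)]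
        have h1 := ih (by omega)
        have h2 := hρβ (n + 1) (by simp [Finset.mem_Icc]; omega)
        linarith
    rcases eq_or_lt_of_le hk.2 with he | hlt
    · subst he
      calc ∑ i ∈ Finset.Icc 1 k, ρ i ≤ β (k + 1) := key k le_rfl
        _ = α k := hβK
    · exact (key k hk.2).trans (hub k (by simp [Finset.mem_Icc]; omega))
  · intro h
    obtain ⟨m, rfl⟩ : ∃ m, K = m + 1 := ⟨K - 1, by omega⟩
    have hm1 : m + 1 - 1 = m := by omega
    refine ⟨fun n => if n = m + 2 then α (m + 1) else ∑ i ∈ Finset.Icc 1 (n - 1), ρ i,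
      ?_, ?_, ?_, ?_, ?_⟩
    · simp only [if_neg (by omega : ¬ 1 = m + 2)]
      simp
    · simp
    · intro k hk
      simp only [Finset.mem_Icc] at hk
      have hsum : ∑ i ∈ Finset.Icc 1 (m + 1), ρ i
          = ∑ i ∈ Finset.Icc 1 m, ρ i + ρ (m + 1) :=
        Finset.sum_Icc_succ_top (by omega) ρ
      rcases eq_or_lt_of_le hk.2 with he | hlt
      · subst he
        simp only [if_neg (by omega : ¬ m + 1 = m + 2), if_pos rfl, if_true, hm1]
        have h1 := h (m + 1) (by simp)
        have h2 := hρ (m + 1) (by simp)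
        linarith
      · simp only [if_neg (by omega : ¬ k = m + 2),
          if_neg (by omega : ¬ k + 1 = m + 2)]
        have : k + 1 - 1 = (k - 1) + 1 := by omega
        rw [this, Finset.sum_Icc_succ_top (by omega : 1 ≤ k - 1 + 1)]
        have := hρ (k - 1 + 1) (by simp [Finset.mem_Icc]; omega)
        linarith
    · intro k hk
      simp only [Finset.mem_Icc, hm1] at hk
      simp only [if_neg (by omega : ¬ k + 1 = m + 2)]
      have : k + 1 - 1 = k := by omega
      rw [this]
      exact h k (by simp [Finset.mem_Icc]; omega)
    · intro k hk
      simp only [Finset.mem_Icc] at hk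
      have hk1 : k + 1 - 1 = (k - 1) + 1 := by omega
      rcases eq_or_lt_of_le hk.2 with he | hlt
      · subst he
        simp only [if_neg (by omega : ¬ m + 1 = m + 2), if_pos rfl, if_true, hm1]
        have h1 := h (m + 1) (by simp)
        have hsum : ∑ i ∈ Finset.Icc 1 (m + 1), ρ i
            = ∑ i ∈ Finset.Icc 1 m, ρ i + ρ (m + 1) :=
          Finset.sum_Icc_succ_top (by omega) ρ
        linarith
      · simp only [if_neg (by omega : ¬ k = m + 2),
          if_neg (by omega : ¬ k + 1 = m + 2)]
        rw [hk1, Finset.sum_Icc_succ_top (by omega : 1 ≤ k - 1 + 1)]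
        have : k - 1 + 1 = k := by omega
        rw [this]
        linarith
end

section
/- Let K ≥ 2, σ ∈ {2,…,K} and s ∈ {1,…,K} be integers, let α_1,…,α_K be reals with 0 < α_1 ≤ ⋯ ≤ α_K, let r_1,…,r_K be nonnegative reals and let r_sym ≥ 0. Then the following are equivalent: (i) there exist nonnegative reals (r_S)_{S ∈ Σ} with r_S ≥ r_sym for every S ∈ Σ with min S ≤ s and r_S = 0 for every S ∈ Σ with min S > s, such that for all k ∈ {1,…,K}: ∑_{i=1}^{k} r_i + ∑_{S ∈ Σ : min S ≤ k} r_S ≤ α_k; (ii) for all k ∈ {1,…,K}: ∑_{i=1}^{k} r_i + (C(K,σ) − C(K−min{k,s},σ)) · r_sym ≤ α_k. -/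
private lemma filter_all_gt (K σ m : ℕ) :
    ((Finset.Icc 1 K).powersetCard σ).filter (fun S => ∀ x ∈ S, m < x)
      = (Finset.Icc (m+1) K).powersetCard σ := by
  ext S
  simp only [Finset.mem_filter, Finset.mem_powersetCard, Finset.subset_iff, Finset.mem_Icc]
  constructor
  · rintro ⟨⟨hsub, hcard⟩, hall⟩
    exact ⟨fun x hx => ⟨hall x hx, (hsub hx).2⟩, hcard⟩
  · rintro ⟨hsub, hcard⟩
    refine ⟨⟨fun x hx => ⟨by have := (hsub hx).1; omega, (hsub hx).2⟩, hcard⟩,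
      fun x hx => by have := (hsub hx).1; omega⟩

private lemma card_filter_exists (K σ m : ℕ) :
    (((Finset.Icc 1 K).powersetCard σ).filter (fun S => ∃ x ∈ S, x ≤ m)).card
      = K.choose σ - (K - m).choose σ := by
  classical
  have hsplit := Finset.card_filter_add_card_filter_not
    (s := (Finset.Icc 1 K).powersetCard σ) (p := fun S => ∃ x ∈ S, x ≤ m)
  have hneg : ((Finset.Icc 1 K).powersetCard σ).filter (fun S => ¬ ∃ x ∈ S, x ≤ m)
      = (Finset.Icc (m+1) K).powersetCard σ := by
    rw [← filter_all_gt K σ m]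
    apply Finset.filter_congr
    intro S _
    simp [not_exists, not_le]
  rw [hneg] at hsplit
  have h1 : ((Finset.Icc 1 K).powersetCard σ).card = K.choose σ := by
    rw [Finset.card_powersetCard, Nat.card_Icc]; norm_num
  have h2 : ((Finset.Icc (m+1) K).powersetCard σ).card = (K - m).choose σ := by
    rw [Finset.card_powersetCard, Nat.card_Icc]
    congr 1; omega
  omega

private lemma choose_sub_le (K σ m : ℕ) : (K - m).choose σ ≤ K.choose σ :=
  Nat.choose_le_choose σ (Nat.sub_le K m)

/-- Corollary 2 (symmetric σ-multicast GDoF region): existence of a feasible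
σ-multicast GDoF assignment with symmetric value r_sym over groups meeting {1,…,s}
is equivalent to the explicit inequalities with counting coefficients. -/
theorem stmt4 (K σ s : ℕ) (hK : 2 ≤ K) (hσ2 : 2 ≤ σ) (hσK : σ ≤ K)
    (hs1 : 1 ≤ s) (hsK : s ≤ K)
    (α r : ℕ → ℝ) (hα0 : 0 < α 1)
    (hαmono : ∀ k ∈ Finset.Icc 1 (K - 1), α k ≤ α (k + 1))
    (hr : ∀ k ∈ Finset.Icc 1 K, 0 ≤ r k) (rsym : ℝ) (hrsym : 0 ≤ rsym) :
    (∃ rS : Finset ℕ → ℝ,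
      (∀ S ∈ (Finset.Icc 1 K).powersetCard σ, 0 ≤ rS S) ∧
      (∀ S ∈ (Finset.Icc 1 K).powersetCard σ, (∃ x ∈ S, x ≤ s) → rsym ≤ rS S) ∧
      (∀ S ∈ (Finset.Icc 1 K).powersetCard σ, (∀ x ∈ S, s < x) → rS S = 0) ∧
      (∀ k ∈ Finset.Icc 1 K,
        ∑ i ∈ Finset.Icc 1 k, r i +
          ∑ S ∈ ((Finset.Icc 1 K).powersetCard σ).filter (fun S => ∃ x ∈ S, x ≤ k), rS S
          ≤ α k)) ↔
    (∀ k ∈ Finset.Icc 1 K,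
      ∑ i ∈ Finset.Icc 1 k, r i +
        ((K.choose σ : ℝ) - ((K - min k s).choose σ : ℝ)) * rsym ≤ α k) := by
  classical
  constructor
  · rintro ⟨rS, hpos, hlb, _, hineq⟩ k hk
    have hk' := Finset.mem_Icc.mp hk
    refine le_trans ?_ (hineq k hk)
    have key : ((K.choose σ : ℝ) - ((K - min k s).choose σ : ℝ)) * rsym
        ≤ ∑ S ∈ ((Finset.Icc 1 K).powersetCard σ).filter (fun S => ∃ x ∈ S, x ≤ k), rS S := by
      have hsub : ((Finset.Icc 1 K).powersetCard σ).filter (fun S => ∃ x ∈ S, x ≤ min k s)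
          ⊆ ((Finset.Icc 1 K).powersetCard σ).filter (fun S => ∃ x ∈ S, x ≤ k) := by
        intro S hS
        rw [Finset.mem_filter] at hS ⊢
        obtain ⟨hS1, x, hxS, hx⟩ := hS
        exact ⟨hS1, x, hxS, le_trans hx (min_le_left k s)⟩
      have h1 : ∑ S ∈ ((Finset.Icc 1 K).powersetCard σ).filter
            (fun S => ∃ x ∈ S, x ≤ min k s), rsym
          ≤ ∑ S ∈ ((Finset.Icc 1 K).powersetCard σ).filter
            (fun S => ∃ x ∈ S, x ≤ min k s), rS S := by
        apply Finset.sum_le_sum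
        intro S hS
        have hS' := Finset.mem_filter.mp hS
        obtain ⟨x, hxS, hx⟩ := hS'.2
        exact hlb S hS'.1 ⟨x, hxS, le_trans hx (min_le_right k s)⟩
      have h2 : ∑ S ∈ ((Finset.Icc 1 K).powersetCard σ).filter
            (fun S => ∃ x ∈ S, x ≤ min k s), rS S
          ≤ ∑ S ∈ ((Finset.Icc 1 K).powersetCard σ).filter (fun S => ∃ x ∈ S, x ≤ k), rS S := by
        apply Finset.sum_le_sum_of_subset_of_nonneg hsub
        intro S hS _
        exact hpos S (Finset.mem_filter.mp hS).1
      have hcard := card_filter_exists K σ (min k s)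
      have hconst : ∑ S ∈ ((Finset.Icc 1 K).powersetCard σ).filter
            (fun S => ∃ x ∈ S, x ≤ min k s), rsym
          = ((K.choose σ : ℝ) - ((K - min k s).choose σ : ℝ)) * rsym := by
        rw [Finset.sum_const, hcard, nsmul_eq_mul]
        have := choose_sub_le K σ (min k s)
        push_cast [Nat.cast_sub this]
        ring
      linarith
    linarith
  · intro h
    refine ⟨fun S => if ∃ x ∈ S, x ≤ s then rsym else 0, ?_, ?_, ?_, ?_⟩
    · intro S _; dsimp only; split <;> simp [hrsym]
    · intro S _ hS; dsimp only; rw [if_pos hS]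
    · intro S _ hS
      dsimp only
      rw [if_neg]
      push_neg
      intro x hx
      exact hS x hx
    · intro k hk
      have hk' := Finset.mem_Icc.mp hk
      have hsum : ∑ S ∈ ((Finset.Icc 1 K).powersetCard σ).filter (fun S => ∃ x ∈ S, x ≤ k),
            (if ∃ x ∈ S, x ≤ s then rsym else 0)
          = ((K.choose σ : ℝ) - ((K - min k s).choose σ : ℝ)) * rsym := by
        rw [← Finset.sum_filter, Finset.filter_filter]
        have hfe : ((Finset.Icc 1 K).powersetCard σ).filter
              (fun S => (∃ x ∈ S, x ≤ k) ∧ ∃ x ∈ S, x ≤ s)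
            = ((Finset.Icc 1 K).powersetCard σ).filter (fun S => ∃ x ∈ S, x ≤ min k s) := by
          apply Finset.filter_congr
          intro S _
          constructor
          · rintro ⟨⟨x, hxS, hx⟩, ⟨y, hyS, hy⟩⟩
            rcases le_total x y with hxy | hxy
            · exact ⟨x, hxS, le_min hx (le_trans hxy hy)⟩
            · exact ⟨y, hyS, le_min (le_trans hxy hx) hy⟩
          · rintro ⟨x, hxS, hx⟩
            exact ⟨⟨x, hxS, le_trans hx (min_le_left k s)⟩,
              ⟨x, hxS, le_trans hx (min_le_right k s)⟩⟩
        rw [hfe, Finset.sum_const, card_filter_exists, nsmul_eq_mul]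
        have := choose_sub_le K σ (min k s)
        push_cast [Nat.cast_sub this]
        ring
      rw [hsum]
      exact h k hk
end

section
/- Let K ≥ 1 and t ∈ {0,…,K−1} be integers, and let α_1,…,α_K be reals with 0 < α_1 ≤ ⋯ ≤ α_K. For k ∈ {1,…,K} define f_k := (C(K,t+1) − C(K−k,t+1)) / C(K,t), let τ_0 := max_{k ∈ {1,…,K}} f_k/α_k, and let k* ∈ {1,…,K} be an index attaining this maximum. Suppose r_1,…,r_K are nonnegative reals with r_k = 0 for all k ∈ {1,…,k*} and ∑_{i=k*+1}^{k} r_i ≤ α_{k*+1} − α_{k*}·(f_k/f_{k*}) for all k ∈ {k*+1,…,K}. Then α_k − ∑_{i=1}^{k} r_i > 0 for every k ∈ {1,…,K} and max_{k ∈ {1,…,K}} f_k/(α_k − ∑_{i=1}^{k} r_i) = τ_0. -/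
/-! For `k ≤ k*` nothing is subtracted, and `f_k / α_k ≤ τ₀ = f_{k*} / α_{k*}` is the
maximality of `k*`. For `k > k*` the budget on the `r_i` and the monotonicity of `α` keep
`α_k - ∑ r_i ≥ α_{k*} f_k / f_{k*}`, which is again `f_k / (α_k - ∑ r_i) ≤ τ₀` after
cross-multiplying. The term `k = k*` attains `τ₀`. -/

open Finset

theorem Nat.choose_lt_choose_of_lt {a b c : ℕ} (hab : a < b) (hc : 0 < c) (hcb : c ≤ b) :
    a.choose c < b.choose c := by
  obtain ⟨b, rfl⟩ := Nat.exists_eq_add_one_of_ne_zero (by omega : b ≠ 0)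
  obtain ⟨c, rfl⟩ := Nat.exists_eq_add_one_of_ne_zero hc.ne'
  calc a.choose (c + 1) ≤ b.choose (c + 1) := Nat.choose_le_choose _ (by omega)
    _ < b.choose c + b.choose (c + 1) := Nat.lt_add_of_pos_left (Nat.choose_pos (by omega))
    _ = (b + 1).choose (c + 1) := (Nat.choose_succ_succ b c).symm

lemma monotoneOn_Icc_of_le_succ {α : Type*} [Preorder α] {f : ℕ → α} {m n : ℕ}
    (hf : ∀ k ∈ Icc m (n - 1), f k ≤ f (k + 1)) : MonotoneOn f (Set.Icc m n) :=
  monotoneOn_of_le_succ Set.ordConnected_Icc fun k _ hk hk1 => by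
    simp only [Order.succ_eq_add_one, Set.mem_Icc] at *
    exact hf k (mem_Icc.mpr ⟨hk.1, by omega⟩)

lemma sum_Icc_one_eq_sum_Icc_succ {M : Type*} [AddCommMonoid M] {r : ℕ → M} {m : ℕ}
    (hr : ∀ i ∈ Icc 1 m, r i = 0) (k : ℕ) :
    ∑ i ∈ Icc 1 k, r i = ∑ i ∈ Icc (m + 1) k, r i := by
  refine (sum_subset (Icc_subset_Icc_left (by omega)) fun i hi hi' => hr i ?_).symm
  simp only [mem_Icc] at hi hi' ⊢
  omega

noncomputable def codedLoad (K t k : ℕ) : ℝ :=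
  ((K.choose (t + 1) : ℝ) - ((K - k).choose (t + 1) : ℝ)) / (K.choose t : ℝ)

lemma codedLoad_pos {K t k : ℕ} (ht : t < K) (hk : 1 ≤ k) : 0 < codedLoad K t k := by
  have hlt : (K - k).choose (t + 1) < K.choose (t + 1) :=
    Nat.choose_lt_choose_of_lt (by omega) t.succ_pos ht
  unfold codedLoad
  exact div_pos (sub_pos.mpr (by exact_mod_cast hlt)) (by exact_mod_cast Nat.choose_pos ht.le)

theorem stmt6_general (K t : ℕ) (hK : 1 ≤ K) (ht : t < K)
    (α r : ℕ → ℝ) (hα0 : 0 < α 1)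
    (hαmono : ∀ k ∈ Finset.Icc 1 (K - 1), α k ≤ α (k + 1))
    (f : ℕ → ℝ)
    (hf : ∀ k, f k = ((K.choose (t + 1) : ℝ) - ((K - k).choose (t + 1) : ℝ)) /
      (K.choose t : ℝ))
    (τ0 : ℝ)
    (hτ0 : τ0 = (Finset.Icc 1 K).sup' (Finset.nonempty_Icc.mpr hK)
      (fun k => f k / α k))
    (kstar : ℕ) (hks : kstar ∈ Finset.Icc 1 K)
    (hksmax : f kstar / α kstar = τ0)
    (hrz : ∀ k ∈ Finset.Icc 1 kstar, r k = 0)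
    (hrb : ∀ k ∈ Finset.Icc (kstar + 1) K,
      ∑ i ∈ Finset.Icc (kstar + 1) k, r i ≤ α (kstar + 1) - α kstar * (f k / f kstar)) :
    (∀ k ∈ Finset.Icc 1 K, 0 < α k - ∑ i ∈ Finset.Icc 1 k, r i) ∧
    (Finset.Icc 1 K).sup' (Finset.nonempty_Icc.mpr hK)
      (fun k => f k / (α k - ∑ i ∈ Finset.Icc 1 k, r i)) = τ0 := by
  have hks1 : 1 ≤ kstar := (mem_Icc.mp hks).1
  have hα_mono := monotoneOn_Icc_of_le_succ hαmono
  have hα_pos : ∀ k ∈ Icc 1 K, 0 < α k := fun k hk =>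
    hα0.trans_le (hα_mono ⟨le_rfl, hK⟩ (mem_Icc.mp hk) (mem_Icc.mp hk).1)
  have hf_pos : ∀ k, 1 ≤ k → 0 < f k := fun k hk => (hf k).symm ▸ codedLoad_pos ht hk
  have hsum := sum_Icc_one_eq_sum_Icc_succ hrz
  have key : ∀ k ∈ Icc 1 K, f k * α kstar ≤ f kstar * (α k - ∑ i ∈ Icc 1 k, r i) := by
    intro k hk
    have hkK : k ≤ K := (mem_Icc.mp hk).2
    rcases le_or_gt k kstar with hle | hlt
    · have hmax := hksmax ▸ hτ0 ▸ le_sup' (fun k => f k / α k) hk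
      rwa [hsum, Icc_eq_empty (by omega), sum_empty, sub_zero,
        ← div_le_div_iff₀ (hα_pos k hk) (hα_pos kstar hks)]
    · have hαk : α (kstar + 1) ≤ α k :=
        hα_mono ⟨by omega, by omega⟩ ⟨by omega, hkK⟩ hlt
      have hbudget := hrb k (mem_Icc.mpr ⟨hlt, hkK⟩)
      rw [hsum, ← div_le_iff₀' (hf_pos kstar hks1), mul_div_right_comm, mul_comm]
      linarith
  have hden_pos : ∀ k ∈ Icc 1 K, 0 < α k - ∑ i ∈ Icc 1 k, r i := fun k hk =>
    pos_of_mul_pos_right ((mul_pos (hf_pos k (mem_Icc.mp hk).1) (hα_pos kstar hks)).trans_le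
      (key k hk)) (hf_pos kstar hks1).le
  refine ⟨hden_pos, le_antisymm (sup'_le _ _ fun k hk => ?_) (le_sup'_of_le _ hks ?_)⟩
  · rw [← hksmax, div_le_div_iff₀ (hden_pos k hk) (hα_pos kstar hks)]
    exact key k hk
  · simp [hsum, hksmax]

/-- Corollary 1 (topological holes): non-content GDoF tuples supported in the
stated region leave the minimum delivery time τ₀ unchanged. -/
theorem stmt6 (K t : ℕ) (hK : 1 ≤ K) (ht : t < K)
    (α r : ℕ → ℝ) (hα0 : 0 < α 1)
    (hαmono : ∀ k ∈ Finset.Icc 1 (K - 1), α k ≤ α (k + 1))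
    (f : ℕ → ℝ)
    (hf : ∀ k, f k = ((K.choose (t + 1) : ℝ) - ((K - k).choose (t + 1) : ℝ)) /
      (K.choose t : ℝ))
    (τ0 : ℝ)
    (hτ0 : τ0 = (Finset.Icc 1 K).sup' (Finset.nonempty_Icc.mpr hK)
      (fun k => f k / α k))
    (kstar : ℕ) (hks : kstar ∈ Finset.Icc 1 K)
    (hksmax : f kstar / α kstar = τ0)
    (hr0 : ∀ k ∈ Finset.Icc 1 K, 0 ≤ r k)
    (hrz : ∀ k ∈ Finset.Icc 1 kstar, r k = 0)
    (hrb : ∀ k ∈ Finset.Icc (kstar + 1) K,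
      ∑ i ∈ Finset.Icc (kstar + 1) k, r i ≤ α (kstar + 1) - α kstar * (f k / f kstar)) :
    (∀ k ∈ Finset.Icc 1 K, 0 < α k - ∑ i ∈ Finset.Icc 1 k, r i) ∧
    (Finset.Icc 1 K).sup' (Finset.nonempty_Icc.mpr hK)
      (fun k => f k / (α k - ∑ i ∈ Finset.Icc 1 k, r i)) = τ0 :=
  stmt6_general K t hK ht α r hα0 hαmono f hf τ0 hτ0 kstar hks hksmax hrz hrb
end

section
/- Let K ≥ 1 and m ∈ {1,…,K} be integers. The sequence c(n) := (C(K,n+1) − C(K−m,n+1)) / C(K,n), defined for n ∈ {0,1,…,K}, is discretely convex: c(n−1) + c(n+1) ≥ 2·c(n) for every n ∈ {1,…,K−1}. -/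
/-!
By the trinomial identity `C(K,t) C(K-t,l) = C(K,l) C(K-l,t)` and the telescoped Pascal rule
`C(K,t+1) - C(K-m,t+1) = ∑_{l=1}^m C(K-l,t)`, the load is
`c(t) = ∑_{l=1}^m C(K-t,l) / C(K,l)`. Each summand is a fixed positive multiple of
`C(K-t,l)`, and `j ↦ C(j,l)` is discretely convex since its first difference `C(j,l-1)` is
monotone; a sum of convex sequences is convex.
-/

open Finset

namespace Nat

theorem choose_mul_choose_sub_comm (K a b : ℕ) :
    K.choose a * (K - a).choose b = K.choose b * (K - b).choose a := by
  have ha := Nat.choose_mul (n := K) (Nat.le_add_right a b)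
  have hb := Nat.choose_mul (n := K) (Nat.le_add_left b a)
  rw [Nat.add_sub_cancel_left] at ha
  rw [Nat.add_sub_cancel] at hb
  rw [← ha, ← hb, Nat.choose_symm_add]

theorem choose_succ_eq_choose_sub_add_sum (K n : ℕ) {m : ℕ} (hm : m ≤ K) :
    K.choose (n + 1) = (K - m).choose (n + 1) + ∑ l ∈ Icc 1 m, (K - l).choose n := by
  induction m with
  | zero => simp
  | succ m ih =>
    have hpascal :
        (K - m).choose (n + 1) = (K - (m + 1)).choose n + (K - (m + 1)).choose (n + 1) := by
      rw [show K - m = K - (m + 1) + 1 by omega, Nat.choose_succ_succ]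
    rw [Finset.sum_Icc_succ_top (by omega), ih (by omega), hpascal]
    ring

theorem two_mul_choose_succ_le (j l : ℕ) :
    2 * (j + 1).choose l ≤ (j + 2).choose l + j.choose l := by
  cases l with
  | zero => simp
  | succ l =>
    have hmono : j.choose l ≤ (j + 1).choose l := Nat.choose_le_choose l (Nat.le_succ j)
    rw [Nat.choose_succ_succ' (j + 1), Nat.choose_succ_succ' j]
    omega

end Nat

theorem choose_sub_div_choose_eq_sum {K m t : ℕ} (hmK : m ≤ K) (htK : t ≤ K) :
    ((K.choose (t + 1) : ℝ) - (K - m).choose (t + 1)) / K.choose t =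
      ∑ l ∈ Icc 1 m, ((K - t).choose l : ℝ) / K.choose l := by
  rw [Nat.choose_succ_eq_choose_sub_add_sum K t hmK, Nat.cast_add, add_sub_cancel_left,
    Nat.cast_sum, Finset.sum_div]
  refine Finset.sum_congr rfl fun l hl => ?_
  have hlK : l ≤ K := (Finset.mem_Icc.mp hl).2.trans hmK
  rw [div_eq_div_iff (by exact_mod_cast (Nat.choose_pos htK).ne')
    (by exact_mod_cast (Nat.choose_pos hlK).ne')]
  norm_cast
  linarith [Nat.choose_mul_choose_sub_comm K l t]

theorem two_mul_choose_sub_le {K n : ℕ} (hn : 1 ≤ n) (hnK : n + 1 ≤ K) (l : ℕ) :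
    2 * ((K - n).choose l : ℝ) ≤ (K - (n - 1)).choose l + (K - (n + 1)).choose l := by
  have h := Nat.two_mul_choose_succ_le (K - (n + 1)) l
  rw [show K - (n + 1) + 1 = K - n by omega, show K - (n + 1) + 2 = K - (n - 1) by omega] at h
  exact_mod_cast h

theorem stmt9_general (K m : ℕ) (hmK : m ≤ K)
    (c : ℕ → ℝ)
    (hc : ∀ n, c n = ((K.choose (n + 1) : ℝ) - ((K - m).choose (n + 1) : ℝ)) /
      (K.choose n : ℝ)) :
    ∀ n ∈ Finset.Icc 1 (K - 1), c (n - 1) + c (n + 1) ≥ 2 * c n := by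
  intro n hn
  obtain ⟨hn1, hnK⟩ := Finset.mem_Icc.mp hn
  simp only [hc, choose_sub_div_choose_eq_sum hmK (by omega : n - 1 ≤ K),
    choose_sub_div_choose_eq_sum hmK (by omega : n + 1 ≤ K),
    choose_sub_div_choose_eq_sum hmK (by omega : n ≤ K), Finset.mul_sum,
    ← Finset.sum_add_distrib]
  refine Finset.sum_le_sum fun l _ => ?_
  rw [← add_div, ← mul_div_assoc]
  exact div_le_div_of_nonneg_right (two_mul_choose_sub_le hn1 (by omega) l) (Nat.cast_nonneg _)

/-- Discrete convexity of the normalized coded-caching load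
c(n) = (C(K,n+1) − C(K−m,n+1))/C(K,n) on {0,…,K}. -/
theorem stmt9 (K m : ℕ) (hK : 1 ≤ K) (hm1 : 1 ≤ m) (hmK : m ≤ K)
    (c : ℕ → ℝ)
    (hc : ∀ n, c n = ((K.choose (n + 1) : ℝ) - ((K - m).choose (n + 1) : ℝ)) /
      (K.choose n : ℝ)) :
    ∀ n ∈ Finset.Icc 1 (K - 1), c (n - 1) + c (n + 1) ≥ 2 * c n :=
  stmt9_general K m hmK c hc
end

section
/- Let K ≥ 2 be an integer, let σ, γ be integers with 2 ≤ σ < γ ≤ K, let s ∈ {1,…,K}, let α_1,…,α_K be reals with 0 < α_1 ≤ ⋯ ≤ α_K, let r_1,…,r_K be nonnegative reals, and let r^σ ≥ 0 and r^γ ≥ 0. Let Σ (resp. Γ) denote the family of all σ-element (resp. γ-element) subsets of {1,…,K}. Then the following are equivalent: (i) there exist nonnegative reals (r_S)_{S∈Σ} and (r_G)_{G∈Γ} with r_S ≥ r^σ for every S ∈ Σ with min S ≤ s, r_S = 0 for min S > s, r_G ≥ r^γ for every G ∈ Γ with min G ≤ s, r_G = 0 for min G > s, such that for all k ∈ {1,…,K}: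 ∑_{i=1}^{k} r_i + ∑_{S ∈ Σ : min S ≤ k} r_S + ∑_{G ∈ Γ : min G ≤ k} r_G ≤ α_k; (ii) for all k ∈ {1,…,K}: ∑_{i=1}^{k} r_i + (C(K,σ) − C(K−min{k,s},σ))·r^σ + (C(K,γ) − C(K−min{k,s},γ))·r^γ ≤ α_k. -/
lemma countlem (K t m : ℕ) :
    (((Finset.Icc 1 K).powersetCard t).filter (fun S => ∃ x ∈ S, x ≤ m)).card
      = K.choose t - (K - m).choose t := by
  have hneg : ((Finset.Icc 1 K).powersetCard t).filter (fun S => ¬ ∃ x ∈ S, x ≤ m)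
      = (Finset.Icc (m+1) K).powersetCard t := by
    ext S
    simp only [Finset.mem_filter, Finset.mem_powersetCard]
    push_neg
    constructor
    · rintro ⟨⟨hsub, hc⟩, h⟩
      refine ⟨fun x hx => ?_, hc⟩
      have h1 := hsub hx
      have h2 := h x hx
      simp only [Finset.mem_Icc] at h1 ⊢
      omega
    · rintro ⟨hsub, hc⟩
      refine ⟨⟨fun x hx => ?_, hc⟩, fun x hx => ?_⟩
      · have := hsub hx; simp only [Finset.mem_Icc] at this ⊢; omega
      · have := hsub hx; simp only [Finset.mem_Icc] at this; omega
  have hsum := Finset.card_filter_add_card_filter_not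
    (s := (Finset.Icc 1 K).powersetCard t) (p := fun S => ∃ x ∈ S, x ≤ m)
  rw [hneg, Finset.card_powersetCard, Finset.card_powersetCard, Nat.card_Icc, Nat.card_Icc] at hsum
  have e1 : K + 1 - 1 = K := by omega
  have e2 : K + 1 - (m+1) = K - m := by omega
  rw [e1, e2] at hsum
  have hle : (K - m).choose t ≤ K.choose t := Nat.choose_le_choose t (Nat.sub_le K m)
  omega

lemma countlemR (K t m : ℕ) :
    ((((Finset.Icc 1 K).powersetCard t).filter (fun S => ∃ x ∈ S, x ≤ m)).card : ℝ)
      = (K.choose t : ℝ) - ((K - m).choose t : ℝ) := by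
  rw [countlem]
  have hle : (K - m).choose t ≤ K.choose t := Nat.choose_le_choose t (Nat.sub_le K m)
  push_cast [hle]
  ring

lemma sum_lower (K t s k : ℕ) (hks : min k s ≤ k) (rσ : ℝ)
    (rS : Finset ℕ → ℝ)
    (h0 : ∀ S ∈ (Finset.Icc 1 K).powersetCard t, 0 ≤ rS S)
    (h1 : ∀ S ∈ (Finset.Icc 1 K).powersetCard t, (∃ x ∈ S, x ≤ s) → rσ ≤ rS S) :
    ((K.choose t : ℝ) - ((K - min k s).choose t : ℝ)) * rσ
      ≤ ∑ S ∈ ((Finset.Icc 1 K).powersetCard t).filter (fun S => ∃ x ∈ S, x ≤ k), rS S := by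
  set A := ((Finset.Icc 1 K).powersetCard t).filter (fun S => ∃ x ∈ S, x ≤ min k s) with hA
  set B := ((Finset.Icc 1 K).powersetCard t).filter (fun S => ∃ x ∈ S, x ≤ k) with hB
  have hAB : A ⊆ B := by
    rw [hA, hB]
    intro S hS
    rw [Finset.mem_filter] at hS ⊢
    exact ⟨hS.1, hS.2.imp fun x ⟨hx, hxm⟩ => ⟨hx, le_trans hxm hks⟩⟩
  have h2 : ∑ S ∈ A, rσ ≤ ∑ S ∈ A, rS S := by
    apply Finset.sum_le_sum
    intro S hS
    rw [hA, Finset.mem_filter] at hS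
    exact h1 S hS.1 (hS.2.imp (fun x ⟨hx, hxm⟩ => ⟨hx, le_trans hxm (min_le_right k s)⟩))
  have h3 : ∑ S ∈ A, rS S ≤ ∑ S ∈ B, rS S := by
    apply Finset.sum_le_sum_of_subset_of_nonneg hAB
    intro S hS _
    rw [hB, Finset.mem_filter] at hS
    exact h0 S hS.1
  calc ((K.choose t : ℝ) - ((K - min k s).choose t : ℝ)) * rσ
      = ∑ S ∈ A, rσ := by
        rw [hA, Finset.sum_const, nsmul_eq_mul, countlemR K t (min k s), mul_comm]
    _ ≤ ∑ S ∈ B, rS S := le_trans h2 h3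

lemma sum_ite_eq' (K t s k : ℕ) (rσ : ℝ) [DecidablePred fun S : Finset ℕ => ∃ x ∈ S, x ≤ s] :
    ∑ S ∈ ((Finset.Icc 1 K).powersetCard t).filter (fun S => ∃ x ∈ S, x ≤ k),
        (if ∃ x ∈ S, x ≤ s then rσ else 0)
      = ((K.choose t : ℝ) - ((K - min k s).choose t : ℝ)) * rσ := by
  rw [← Finset.sum_filter, Finset.filter_filter]
  have hpred : ((Finset.Icc 1 K).powersetCard t).filter
        (fun S => (∃ x ∈ S, x ≤ k) ∧ ∃ x ∈ S, x ≤ s)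
      = ((Finset.Icc 1 K).powersetCard t).filter (fun S => ∃ x ∈ S, x ≤ min k s) := by
    apply Finset.filter_congr
    intro S _
    constructor
    · rintro ⟨⟨x, hx, hxk⟩, ⟨y, hy, hys⟩⟩
      rcases le_total x y with h | h
      · exact ⟨x, hx, le_min hxk (le_trans h hys)⟩
      · exact ⟨y, hy, le_min (le_trans h hxk) hys⟩
    · rintro ⟨x, hx, hxm⟩
      exact ⟨⟨x, hx, le_trans hxm (min_le_left k s)⟩, ⟨x, hx, le_trans hxm (min_le_right k s)⟩⟩
  rw [hpred, Finset.sum_const, nsmul_eq_mul, countlemR K t (min k s), mul_comm]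

/-- Symmetric projection of the GDoF region with unicast messages and two nested
multicast message sets of group sizes σ < γ: feasibility of a symmetric
assignment is equivalent to the explicit counting inequalities. -/
theorem stmt13 (K σ γ s : ℕ) (hK : 2 ≤ K) (hσ2 : 2 ≤ σ) (hσγ : σ < γ) (hγK : γ ≤ K)
    (hs1 : 1 ≤ s) (hsK : s ≤ K)
    (α r : ℕ → ℝ) (hα0 : 0 < α 1)
    (hαmono : ∀ k ∈ Finset.Icc 1 (K - 1), α k ≤ α (k + 1))
    (hr : ∀ k ∈ Finset.Icc 1 K, 0 ≤ r k)
    (rσ rγ : ℝ) (hrσ : 0 ≤ rσ) (hrγ : 0 ≤ rγ) :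
    (∃ rS : Finset ℕ → ℝ, ∃ rG : Finset ℕ → ℝ,
      (∀ S ∈ (Finset.Icc 1 K).powersetCard σ, 0 ≤ rS S) ∧
      (∀ S ∈ (Finset.Icc 1 K).powersetCard σ, (∃ x ∈ S, x ≤ s) → rσ ≤ rS S) ∧
      (∀ S ∈ (Finset.Icc 1 K).powersetCard σ, (∀ x ∈ S, s < x) → rS S = 0) ∧
      (∀ G ∈ (Finset.Icc 1 K).powersetCard γ, 0 ≤ rG G) ∧
      (∀ G ∈ (Finset.Icc 1 K).powersetCard γ, (∃ x ∈ G, x ≤ s) → rγ ≤ rG G) ∧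
      (∀ G ∈ (Finset.Icc 1 K).powersetCard γ, (∀ x ∈ G, s < x) → rG G = 0) ∧
      (∀ k ∈ Finset.Icc 1 K,
        ∑ i ∈ Finset.Icc 1 k, r i +
          ∑ S ∈ ((Finset.Icc 1 K).powersetCard σ).filter (fun S => ∃ x ∈ S, x ≤ k), rS S +
          ∑ G ∈ ((Finset.Icc 1 K).powersetCard γ).filter (fun G => ∃ x ∈ G, x ≤ k), rG G
          ≤ α k)) ↔
    (∀ k ∈ Finset.Icc 1 K,
      ∑ i ∈ Finset.Icc 1 k, r i +
        ((K.choose σ : ℝ) - ((K - min k s).choose σ : ℝ)) * rσ +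
        ((K.choose γ : ℝ) - ((K - min k s).choose γ : ℝ)) * rγ ≤ α k) := by
  classical
  constructor
  · rintro ⟨rS, rG, h0S, h1S, -, h0G, h1G, -, hineq⟩ k hk
    have hσlow := sum_lower K σ s k (min_le_left k s) rσ rS h0S h1S
    have hγlow := sum_lower K γ s k (min_le_left k s) rγ rG h0G h1G
    have := hineq k hk
    linarith
  · intro h
    refine ⟨fun S => if ∃ x ∈ S, x ≤ s then rσ else 0,
           fun G => if ∃ x ∈ G, x ≤ s then rγ else 0,
           fun S _ => ?_, fun S _ hS => ?_, fun S _ hS => ?_,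
           fun G _ => ?_, fun G _ hG => ?_, fun G _ hG => ?_,
           fun k hk => ?_⟩
    · dsimp only; split
      · exact hrσ
      · exact le_refl 0
    · dsimp only; rw [if_pos hS]
    · dsimp only; rw [if_neg]; push_neg; exact hS
    · dsimp only; split
      · exact hrγ
      · exact le_refl 0
    · dsimp only; rw [if_pos hG]
    · dsimp only; rw [if_neg]; push_neg; exact hG
    · dsimp only
      rw [sum_ite_eq' K σ s k rσ, sum_ite_eq' K γ s k rγ]
      exact h k hk
end

section
/- Let K ≥ 1 be an integer, let P > 1 be a real number, let α_1,…,α_K be reals with 0 < α_1 ≤ ⋯ ≤ α_K, and let ρ̃_1,…,ρ̃_K be nonnegative reals satisfying ∑_{i=1}^{k} ρ̃_i ≤ max{0, α_k·log₂ P − k} for all k ∈ {1,…,K}. Then there exist nonnegative reals ρ_1,…,ρ_K such that ∑_{i=1}^{k} ρ_i ≤ α_k for all k ∈ {1,…,K} and ρ̃_k ≤ max{0, ρ_k·log₂ P − 1} for every k ∈ {1,…,K}. -/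
/-!
Give layer `k` the GDoF `ρ_k = (ρ̃_k + 1) / log₂ P`, or `0` when `ρ̃_k = 0`; then `ρ_k log₂ P - 1 = ρ̃_k`
exactly on the active layers. For the cumulative constraint at `k`: if `α_k log₂ P ≥ k`, summing
`ρ_i ≤ (ρ̃_i + 1) / log₂ P` over the first `k` layers gives at most `α_k`; otherwise the hypothesis
forces `ρ̃_1 = ⋯ = ρ̃_k = 0`, so the partial sum of `ρ` vanishes and is bounded by `α_k ≥ α_1 > 0`.
-/

open Finset

noncomputable def layerGDoF (L x : ℝ) : ℝ := if x = 0 then 0 else (x + 1) / L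

lemma layerGDoF_nonneg {L x : ℝ} (hL : 0 ≤ L) (hx : 0 ≤ x) : 0 ≤ layerGDoF L x := by
  unfold layerGDoF
  split_ifs <;> positivity

lemma layerGDoF_le {L x : ℝ} (hL : 0 ≤ L) (hx : 0 ≤ x) : layerGDoF L x ≤ (x + 1) / L := by
  unfold layerGDoF
  split_ifs <;> first | positivity | rfl

lemma le_max_layerGDoF_mul_sub_one {L : ℝ} (hL : L ≠ 0) (x : ℝ) :
    x ≤ max 0 (layerGDoF L x * L - 1) := by
  unfold layerGDoF
  split_ifs with hx
  · simp [hx]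
  · rw [div_mul_cancel₀ _ hL, add_sub_cancel_right]
    exact le_max_right _ _

lemma sum_layerGDoF_le {ι : Type*} {s : Finset ι} {f : ι → ℝ} {L a : ℝ} (hL : 0 < L)
    (ha : 0 ≤ a) (hf : ∀ i ∈ s, 0 ≤ f i) (hsum : ∑ i ∈ s, f i ≤ max 0 (a * L - #s)) :
    ∑ i ∈ s, layerGDoF L (f i) ≤ a := by
  rcases le_or_gt (#s : ℝ) (a * L) with hcard | hcard
  · rw [max_eq_right (by linarith)] at hsum
    calc ∑ i ∈ s, layerGDoF L (f i)
        ≤ ∑ i ∈ s, (f i + 1) / L := sum_le_sum fun i hi => layerGDoF_le hL.le (hf i hi)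
      _ = (∑ i ∈ s, f i + #s) / L := by
          rw [← sum_div, sum_add_distrib, sum_const, nsmul_one]
      _ ≤ a * L / L := by gcongr; linarith
      _ = a := mul_div_cancel_right₀ a hL.ne'
  · rw [max_eq_left (by linarith)] at hsum
    have hzero : ∀ i ∈ s, f i = 0 :=
      (sum_eq_zero_iff_of_nonneg hf).mp (le_antisymm hsum (sum_nonneg hf))
    rw [sum_eq_zero fun i hi => by simp [layerGDoF, hzero i hi]]
    exact ha

theorem stmt14_general (K : ℕ) (P : ℝ) (hP : 1 < P)
    (α ρt : ℕ → ℝ) (hα0 : 0 < α 1)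
    (hαmono : ∀ k ∈ Finset.Icc 1 (K - 1), α k ≤ α (k + 1))
    (hρt : ∀ k ∈ Finset.Icc 1 K, 0 ≤ ρt k)
    (hsum : ∀ k ∈ Finset.Icc 1 K,
      ∑ i ∈ Finset.Icc 1 k, ρt i ≤ max 0 (α k * Real.logb 2 P - k)) :
    ∃ ρ : ℕ → ℝ,
      (∀ k ∈ Finset.Icc 1 K, 0 ≤ ρ k) ∧
      (∀ k ∈ Finset.Icc 1 K, ∑ i ∈ Finset.Icc 1 k, ρ i ≤ α k) ∧
      (∀ k ∈ Finset.Icc 1 K, ρt k ≤ max 0 (ρ k * Real.logb 2 P - 1)) := by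
  have hL : 0 < Real.logb 2 P := Real.logb_pos one_lt_two hP
  have hαmonoOn : MonotoneOn α (Set.Icc 1 K) :=
    monotoneOn_of_le_succ Set.ordConnected_Icc fun k _ hk hk1 => by
      rw [Order.succ_eq_add_one] at hk1 ⊢
      exact hαmono k (by simp only [mem_Icc, Set.mem_Icc] at hk hk1 ⊢; omega)
  refine ⟨fun k => layerGDoF (Real.logb 2 P) (ρt k), fun k hk => layerGDoF_nonneg hL.le (hρt k hk),
    fun k hk => ?_, fun k _ => le_max_layerGDoF_mul_sub_one hL.ne' (ρt k)⟩
  obtain ⟨hk1, hkK⟩ := mem_Icc.mp hk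
  have hαk : 0 ≤ α k := hα0.le.trans <|
    hαmonoOn ⟨le_rfl, hk1.trans hkK⟩ ⟨hk1, hkK⟩ hk1
  refine sum_layerGDoF_le hL hαk (fun i hi => hρt i ?_) ?_
  · simp only [mem_Icc] at hi ⊢
    omega
  · simpa using hsum k hk

/-- Constant-gap step (Corollary 4): any rate tuple satisfying the explicit
cumulative constraints ∑ ρ̃_i ≤ (α_k log₂P − k)⁺ is supported by a GDoF
assignment ρ in the polyhedral GDoF region with per-layer gap of 1 bit. -/
theorem stmt14 (K : ℕ) (hK : 1 ≤ K) (P : ℝ) (hP : 1 < P)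
    (α ρt : ℕ → ℝ) (hα0 : 0 < α 1)
    (hαmono : ∀ k ∈ Finset.Icc 1 (K - 1), α k ≤ α (k + 1))
    (hρt : ∀ k ∈ Finset.Icc 1 K, 0 ≤ ρt k)
    (hsum : ∀ k ∈ Finset.Icc 1 K,
      ∑ i ∈ Finset.Icc 1 k, ρt i ≤ max 0 (α k * Real.logb 2 P - k)) :
    ∃ ρ : ℕ → ℝ,
      (∀ k ∈ Finset.Icc 1 K, 0 ≤ ρ k) ∧
      (∀ k ∈ Finset.Icc 1 K, ∑ i ∈ Finset.Icc 1 k, ρ i ≤ α k) ∧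
      (∀ k ∈ Finset.Icc 1 K, ρt k ≤ max 0 (ρ k * Real.logb 2 P - 1)) :=
  stmt14_general K P hP α ρt hα0 hαmono hρt hsum
end
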